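/- Let w : ℝ³ → ℝ be C² with w_x ≠ 0, and a, b distinct nonzero constants. Define the 5×5 antisymmetric matrices P₀ and P₁ on coordinates (x,y,z,p₀,p₁) by P₀ with nonzero entries P₀^{14} = −w_z/w_x, P₀^{15} = −w_y/w_x, P₀^{25} = 1, P₀^{34} = 1 (antisymmetrized), and P₁ with nonzero entries P₁^{25} = b, P₁^{34} = a (antisymmetrized). Then P₀ + λP₁ defines a Poisson bracket (i.e. satisfies the Jacobi identity) for all λ ∈ ℝ if and only if w satisfies the dispersionless Hirota equation (b−a)w_x w_{yz} + a w_y w_{zx} − b w_z w_{xy} = 0. -/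

import Mathlib

noncomputable section

abbrev Pt3 := Fin 3 → ℝ
abbrev Pt5 := Fin 5 → ℝ

/-- Partial derivative on ℝ³. -/
def pd (j : Fin 3) (f : Pt3 → ℝ) (p : Pt3) : ℝ :=
  fderiv ℝ f p (Pi.single j 1)

/-- Partial derivative on ℝ⁵. -/
def pd5 (j : Fin 5) (f : Pt5 → ℝ) (q : Pt5) : ℝ :=
  fderiv ℝ f q (Pi.single j 1)

/-- Projection to the base ℝ³ (coordinates x,y,z). -/
def base (q : Pt5) : Pt3 := ![q 0, q 1, q 2]

/-- The dispersionless Hirota expression (b−a)w_x w_{yz} + a w_y w_{zx} − b w_z w_{xy}. -/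
def hirota (a b : ℝ) (w : Pt3 → ℝ) (p : Pt3) : ℝ :=
  (b - a) * pd 0 w p * pd 1 (fun q => pd 2 w q) p
    + a * pd 1 w p * pd 2 (fun q => pd 0 w q) p
    - b * pd 2 w p * pd 0 (fun q => pd 1 w q) p

/-- The Poisson matrix P₀ on ℝ⁵ with coordinates (x,y,z,p₀,p₁). -/
def P0 (w : Pt3 → ℝ) (q : Pt5) : Matrix (Fin 5) (Fin 5) ℝ :=
  !![0, 0, 0, -(pd 2 w (base q) / pd 0 w (base q)), -(pd 1 w (base q) / pd 0 w (base q));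
     0, 0, 0, 0, 1;
     0, 0, 0, 1, 0;
     pd 2 w (base q) / pd 0 w (base q), 0, -1, 0, 0;
     pd 1 w (base q) / pd 0 w (base q), -1, 0, 0, 0]

/-- The constant Poisson matrix P₁. -/
def P1 (a b : ℝ) : Matrix (Fin 5) (Fin 5) ℝ :=
  !![0, 0, 0, 0, 0;
     0, 0, 0, 0, b;
     0, 0, 0, a, 0;
     0, 0, -a, 0, 0;
     0, -b, 0, 0, 0]

/-- The Jacobi expression Σ_δ (P^{δγ}∂_δP^{αβ} + P^{δβ}∂_δP^{γα} + P^{δα}∂_δP^{βγ}). -/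
def jacobi (P : Pt5 → Matrix (Fin 5) (Fin 5) ℝ) (q : Pt5) (α β γ : Fin 5) : ℝ :=
  ∑ δ : Fin 5, (P q δ γ * pd5 δ (fun r => P r α β) q
    + P q δ β * pd5 δ (fun r => P r γ α) q
    + P q δ α * pd5 δ (fun r => P r β γ) q)

/-! With `F = w_z/w_x`, `G = w_y/w_x`, every nonconstant entry of `P₀ + λP₁` is `±F` or `±G`,
lies in a row or column indexed by `x`, and depends only on `(x, y, z)`. Hence the only
component of the Jacobiator that can survive is the one with indices `(x, p₀, p₁)` (up to
permutation), namely `G F_x − F G_x − (1 + λb) F_y + (1 + λa) G_z`. After clearing the denominator `w_x²` with the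
quotient rule, its `λ`-free part cancels by the symmetry of second derivatives and its `λ`-part
is `−λ` times the Hirota expression. -/

theorem fderiv_fun_div_apply {E : Type*} [NormedAddCommGroup E] [NormedSpace ℝ E]
    {u v : E → ℝ} {x : E} (hu : DifferentiableAt ℝ u x) (hv : DifferentiableAt ℝ v x)
    (hx : v x ≠ 0) (e : E) :
    fderiv ℝ (fun y => u y / v y) x e
      = (fderiv ℝ u x e * v x - u x * fderiv ℝ v x e) / v x ^ 2 := by
  have hinv := (hasDerivAt_inv hx).comp_hasFDerivAt x hv.hasFDerivAt
  have hdiv := (hu.hasFDerivAt.mul hinv).fderiv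
  have hfun : (fun y => u y / v y) = u * ((fun y => y⁻¹) ∘ v) := by
    funext y; simp [div_eq_mul_inv]
  rw [hfun, hdiv]
  simp
  field_simp
  ring

theorem pd_symm {w : Pt3 → ℝ} (hw : ContDiff ℝ 2 w) (i j : Fin 3) (p : Pt3) :
    pd i (pd j w) p = pd j (pd i w) p := by
  have h2 : DifferentiableAt ℝ (fderiv ℝ w) p :=
    (hw.fderiv_right le_rfl).differentiable one_ne_zero p
  have happly : ∀ k l : Fin 3, pd k (pd l w) p =
      fderiv ℝ (fderiv ℝ w) p (Pi.single k 1) (Pi.single l 1) := fun k l => by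
    change fderiv ℝ (fun y => fderiv ℝ w y (Pi.single l 1)) p (Pi.single k 1) = _
    rw [fderiv_clm_apply h2 (differentiableAt_const _)]
    simp
  rw [happly, happly, (hw.contDiffAt.isSymmSndFDerivAt (by simp)).eq]

theorem differentiable_pd {w : Pt3 → ℝ} (hw : ContDiff ℝ 2 w) (j : Fin 3) :
    Differentiable ℝ (pd j w) :=
  ((hw.fderiv_right le_rfl).clm_apply contDiff_const).differentiable one_ne_zero

def baseL : Pt5 →L[ℝ] Pt3 :=
  ContinuousLinearMap.pi ![ContinuousLinearMap.proj 0, ContinuousLinearMap.proj 1,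
    ContinuousLinearMap.proj 2]

theorem coe_baseL : ⇑baseL = base := by
  funext q i
  fin_cases i <;> rfl

theorem base_single (j : Fin 5) :
    base (Pi.single j 1) = if h : j.val < 3 then Pi.single ⟨j, h⟩ 1 else 0 := by
  fin_cases j <;> funext i <;> fin_cases i <;> simp [base]

theorem pd5_comp_base {f : Pt3 → ℝ} {q : Pt5} (hf : DifferentiableAt ℝ f (base q)) (j : Fin 5) :
    pd5 j (fun r => f (base r)) q = if h : j.val < 3 then pd ⟨j, h⟩ f (base q) else 0 := by
  have hcomp : (fun r => f (base r)) = f ∘ baseL := by rw [coe_baseL]; rfl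
  rw [pd5, hcomp, fderiv_comp q (by rwa [coe_baseL]) baseL.differentiableAt,
    ContinuousLinearMap.fderiv, ContinuousLinearMap.comp_apply, coe_baseL, base_single]
  split <;> simp [pd]

@[simp]
theorem pd5_const (j : Fin 5) (c : ℝ) (q : Pt5) : pd5 j (fun _ => c) q = 0 := by
  simp [pd5]

@[simp]
theorem pd5_neg (j : Fin 5) (f : Pt5 → ℝ) (q : Pt5) :
    pd5 j (fun r => -f r) q = -pd5 j f q := by
  simp [pd5]

def pencil (F G : Pt3 → ℝ) (c d : ℝ) (q : Pt5) : Matrix (Fin 5) (Fin 5) ℝ :=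
  !![0, 0, 0, -F (base q), -G (base q);
     0, 0, 0, 0, d;
     0, 0, 0, c, 0;
     F (base q), 0, -c, 0, 0;
     G (base q), -d, 0, 0, 0]

theorem P0_add_smul_P1 (w : Pt3 → ℝ) (a b lam : ℝ) (q : Pt5) :
    P0 w q + lam • P1 a b
      = pencil (fun p => pd 2 w p / pd 0 w p) (fun p => pd 1 w p / pd 0 w p)
          (1 + lam * a) (1 + lam * b) q := by
  ext i j
  fin_cases i <;> fin_cases j <;> simp [P0, P1, pencil] <;> ring

def pencilJacobi (F G : Pt3 → ℝ) (c d : ℝ) (p : Pt3) : ℝ :=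
  G p * pd 0 F p - F p * pd 0 G p - d * pd 1 F p + c * pd 2 G p

def sign034 (α β γ : Fin 5) : ℝ :=
  if α = 0 ∧ β = 3 ∧ γ = 4 ∨ α = 3 ∧ β = 4 ∧ γ = 0 ∨ α = 4 ∧ β = 0 ∧ γ = 3 then 1
  else if α = 0 ∧ β = 4 ∧ γ = 3 ∨ α = 4 ∧ β = 3 ∧ γ = 0 ∨ α = 3 ∧ β = 0 ∧ γ = 4 then -1
  else 0

theorem jacobi_pencil {F G : Pt3 → ℝ} (c d : ℝ) {q : Pt5}
    (hF : DifferentiableAt ℝ F (base q)) (hG : DifferentiableAt ℝ G (base q)) (α β γ : Fin 5) :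
    jacobi (pencil F G c d) q α β γ = sign034 α β γ * pencilJacobi F G c d (base q) := by
  have hF' := pd5_comp_base hF
  have hG' := pd5_comp_base hG
  fin_cases α <;> fin_cases β <;> fin_cases γ <;>
    simp [jacobi, Fin.sum_univ_five, pencil, pencilJacobi, sign034, hF', hG'] <;> ring

theorem pencilJacobi_mul_sq {w : Pt3 → ℝ} (hw : ContDiff ℝ 2 w) (a b lam : ℝ) {p : Pt3}
    (hp : pd 0 w p ≠ 0) :
    pencilJacobi (fun p => pd 2 w p / pd 0 w p) (fun p => pd 1 w p / pd 0 w p)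
        (1 + lam * a) (1 + lam * b) p * pd 0 w p ^ 2
      = -lam * hirota a b w p := by
  have hquot : ∀ i j : Fin 3, pd j (fun p => pd i w p / pd 0 w p) p
      = (pd j (pd i w) p * pd 0 w p - pd i w p * pd j (pd 0 w) p) / pd 0 w p ^ 2 :=
    fun i j => fderiv_fun_div_apply (differentiable_pd hw i p) (differentiable_pd hw 0 p) hp _
  rw [pencilJacobi, hquot, hquot, hquot, hquot, hirota, pd_symm hw 0 2, pd_symm hw 1 0,
    pd_symm hw 2 1]
  field_simp
  ring

theorem jacobi_P0_add_smul_P1_mul_sq {w : Pt3 → ℝ} (hw : ContDiff ℝ 2 w) (a b lam : ℝ)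
    {q : Pt5} (hq : pd 0 w (base q) ≠ 0) (α β γ : Fin 5) :
    jacobi (fun r => P0 w r + lam • P1 a b) q α β γ * pd 0 w (base q) ^ 2
      = -(lam * sign034 α β γ * hirota a b w (base q)) := by
  have hdiv : ∀ i : Fin 3, DifferentiableAt ℝ (fun p => pd i w p / pd 0 w p) (base q) :=
    fun i => by
      have := differentiable_pd hw i
      have := differentiable_pd hw 0
      fun_prop (disch := exact hq)
  simp only [P0_add_smul_P1]
  rw [jacobi_pencil _ _ (hdiv 2) (hdiv 1), mul_assoc, pencilJacobi_mul_sq hw a b lam hq]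
  ring

theorem stmt10_general (w : Pt3 → ℝ) (hw : ContDiff ℝ 2 w) (a b : ℝ)
    (B : Set Pt3) (hwx : ∀ p ∈ B, pd 0 w p ≠ 0) :
    (∀ lam : ℝ, ∀ q : Pt5, base q ∈ B → ∀ α β γ : Fin 5,
        jacobi (fun r => P0 w r + lam • P1 a b) q α β γ = 0) ↔
      (∀ p ∈ B, hirota a b w p = 0) := by
  constructor
  · intro hjac p hp
    have hbase : base ![p 0, p 1, p 2, 0, 0] = p := by
      funext i; fin_cases i <;> rfl
    have key := jacobi_P0_add_smul_P1_mul_sq hw a b 1 (hbase ▸ hwx p hp) 0 3 4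
    rw [hjac 1 _ (hbase ▸ hp), hbase] at key
    simpa [sign034] using key
  · intro hhir lam q hq α β γ
    have key := jacobi_P0_add_smul_P1_mul_sq hw a b lam (hwx _ hq) α β γ
    rw [hhir _ hq, mul_zero, neg_zero] at key
    exact (mul_eq_zero.mp key).resolve_right (pow_ne_zero 2 (hwx _ hq))

theorem stmt10 (w : Pt3 → ℝ) (hw : ContDiff ℝ 2 w) (a b : ℝ)
    (ha : a ≠ 0) (hb : b ≠ 0) (hab : a ≠ b)
    (B : Set Pt3) (hB : IsOpen B) (hwx : ∀ p ∈ B, pd 0 w p ≠ 0) :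
    (∀ lam : ℝ, ∀ q : Pt5, base q ∈ B → ∀ α β γ : Fin 5,
        jacobi (fun r => P0 w r + lam • P1 a b) q α β γ = 0) ↔
      (∀ p ∈ B, hirota a b w p = 0) :=
  stmt10_general w hw a b B hwx
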